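/- Non-leaky SCCs can be realized as BSCCs: let I be an IMC on finite state set X with bounds Ť, T̂ satisfying Ť ≤ T̂ and ∑_y Ť(x,y) ≤ 1 ≤ ∑_y T̂(x,y) for all x. Let C ⊆ X be a set with no leaky states, i.e. for every x ∈ C: Ť(x, y) = 0 for all y ∉ C, and ∑_{y ∈ C} T̂(x, y) ≥ 1. Then there exists a Markov chain M induced by I such that every state in C transitions only within C (∑_{y ∈ C} T_M(x, y) = 1 for all x ∈ C). -/

import Mathlib

/-!
Each row is chosen independently. A row with lower and upper bounds `l ≤ u` and
`∑ l ≤ 1 ≤ ∑ u` admits the distribution `l + θ (u - l)` for a suitable `θ ∈ [0, 1]`.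
For a state of `C`, first lower the upper bounds outside `C` to the lower bounds, which
vanish there; the hypotheses on `C` keep the row feasible, and every distribution between
the new bounds stays inside `C`.
-/

open Finset

theorem exists_le_le_sum_eq {ι : Type*} [Fintype ι] {l u : ι → ℝ} {c : ℝ}
    (hlu : ∀ i, l i ≤ u i) (hl : ∑ i, l i ≤ c) (hu : c ≤ ∑ i, u i) :
    ∃ t : ι → ℝ, (∀ i, l i ≤ t i ∧ t i ≤ u i) ∧ ∑ i, t i = c := by
  set θ := (c - ∑ i, l i) / (∑ i, u i - ∑ i, l i)
  have hθ₀ : 0 ≤ θ := div_nonneg (by linarith) (by linarith)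
  have hθ₁ : θ ≤ 1 := div_le_one_of_le₀ (by linarith) (by linarith)
  refine ⟨fun i => l i + θ * (u i - l i), fun i => ?_, ?_⟩
  · have := hlu i
    constructor <;> nlinarith
  · rw [sum_add_distrib, ← mul_sum, sum_sub_distrib]
    -- when `∑ u = ∑ l` the junk value `θ = 0` still works, since then `c = ∑ l`
    rcases (sub_nonneg.2 (hl.trans hu)).eq_or_lt with h | h
    · rw [← h, mul_zero]; linarith
    · rw [div_mul_cancel₀ _ h.ne']; ring

theorem nonleaky_realizable_as_absorbing_general {X : Type*} [Fintype X]
    (Tl Tu : X → X → ℝ)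
    (hle : ∀ x y, Tl x y ≤ Tu x y)
    (hlow : ∀ x, (∑ y, Tl x y) ≤ 1)
    (hup : ∀ x, 1 ≤ ∑ y, Tu x y)
    (C : Set X) [DecidablePred (· ∈ C)]
    (hC₁ : ∀ x ∈ C, ∀ y ∉ C, Tl x y = 0)
    (hC₂ : ∀ x ∈ C, 1 ≤ ∑ y ∈ Finset.univ.filter (· ∈ C), Tu x y) :
    ∃ T : X → X → ℝ,
      (∀ x, ∑ y, T x y = 1) ∧
      (∀ x y, Tl x y ≤ T x y ∧ T x y ≤ Tu x y) ∧
      (∀ x ∈ C, ∑ y ∈ Finset.univ.filter (· ∈ C), T x y = 1) := by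
  let U : X → X → ℝ := fun x y => if x ∈ C ∧ y ∉ C then Tl x y else Tu x y
  have hTl_U x y : Tl x y ≤ U x y := by unfold U; split_ifs <;> simp [hle]
  have hU_Tu x y : U x y ≤ Tu x y := by unfold U; split_ifs <;> simp [hle]
  have hU_sum x : 1 ≤ ∑ y, U x y := by
    by_cases hx : x ∈ C
    · simpa [U, hx, sum_ite, sum_eq_zero (fun y hy => hC₁ x hx y (mem_filter.1 hy).2)]
        using hC₂ x hx
    · simpa [U, hx] using hup x
  choose T hT hT_sum using fun x =>
    exists_le_le_sum_eq (fun y => hTl_U x y) (hlow x) (hU_sum x)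
  refine ⟨T, hT_sum, fun x y => ⟨(hT x y).1, (hT x y).2.trans (hU_Tu x y)⟩, fun x hx => ?_⟩
  rw [sum_filter_of_ne fun y _ hy => ?_, hT_sum]
  by_contra hyC
  have hTl : Tl x y = 0 := hC₁ x hx y hyC
  have hU : U x y = 0 := by simp [U, hx, hyC, hTl]
  exact hy (by linarith [hT x y])

/-- Non-leaky SCCs can be realized as BSCCs: if no state of `C` is leaky (all
lower bounds out of `C` vanish and the upper bounds into `C` sum to at least
`1`), then the IMC induces a Markov chain in which every state of `C`
transitions only within `C`. -/
theorem nonleaky_realizable_as_absorbing {X : Type*} [Fintype X] [Nonempty X]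
    (Tl Tu : X → X → ℝ)
    (h01l : ∀ x y, Tl x y ∈ Set.Icc (0 : ℝ) 1)
    (h01u : ∀ x y, Tu x y ∈ Set.Icc (0 : ℝ) 1)
    (hle : ∀ x y, Tl x y ≤ Tu x y)
    (hlow : ∀ x, (∑ y, Tl x y) ≤ 1)
    (hup : ∀ x, 1 ≤ ∑ y, Tu x y)
    (C : Set X) [DecidablePred (· ∈ C)]
    (hC₁ : ∀ x ∈ C, ∀ y ∉ C, Tl x y = 0)
    (hC₂ : ∀ x ∈ C, 1 ≤ ∑ y ∈ Finset.univ.filter (· ∈ C), Tu x y) :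
    ∃ T : X → X → ℝ,
      (∀ x, ∑ y, T x y = 1) ∧
      (∀ x y, Tl x y ≤ T x y ∧ T x y ≤ Tu x y) ∧
      (∀ x ∈ C, ∑ y ∈ Finset.univ.filter (· ∈ C), T x y = 1) :=
  nonleaky_realizable_as_absorbing_general Tl Tu hle hlow hup C hC₁ hC₂
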